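/- Every nonzero harmonic multilinear polynomial in the variables x₁,…,xₙ over ℝ has total degree at most n/2. -/
import Mathlib


open MvPolynomial

/-- A multilinear polynomial: every monomial is squarefree. -/
def IsMultilinear {n : ℕ} (P : MvPolynomial (Fin n) ℝ) : Prop :=
  ∀ m ∈ P.support, ∀ i, m i ≤ 1

/-- A harmonic polynomial: the sum of all partial derivatives vanishes. -/
def IsHarmonic {n : ℕ} (P : MvPolynomial (Fin n) ℝ) : Prop :=
  ∑ i, MvPolynomial.pderiv i P = 0

open Finset

/-- The squarefree exponent vector (indicator finsupp) of a finite set of variables. -/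
noncomputable def eS {n : ℕ} (S : Finset (Fin n)) : Fin n →₀ ℕ :=
  ∑ i ∈ S, Finsupp.single i 1

lemma eS_apply {n : ℕ} (S : Finset (Fin n)) (i : Fin n) :
    eS S i = if i ∈ S then 1 else 0 := by
  classical
  rw [eS, Finset.sum_apply']
  simp [Finsupp.single_apply, Finset.sum_ite_eq' S i]

lemma eS_insert {n : ℕ} {S : Finset (Fin n)} {i : Fin n} (h : i ∉ S) :
    eS (insert i S) = eS S + Finsupp.single i 1 := by
  rw [eS, Finset.sum_insert h, add_comm]; rfl

lemma eS_sum {n : ℕ} (S : Finset (Fin n)) : ((eS S).sum fun _ e => e) = S.card := by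
  classical
  rw [Finsupp.sum_fintype _ _ (fun _ => rfl)]
  simp [eS_apply]

lemma coeff_pderiv' {n : ℕ} (P : MvPolynomial (Fin n) ℝ) (i : Fin n) (t : Fin n →₀ ℕ) :
    coeff t (pderiv i P) = (t i + 1) * coeff (t + Finsupp.single i 1) P := by
  conv_lhs => rw [P.as_sum]
  rw [map_sum, MvPolynomial.coeff_sum]
  simp only [pderiv_monomial, coeff_monomial]
  rw [Finset.sum_eq_single (t + Finsupp.single i 1)]
  · simp [mul_comm]
  · intro m hm hne
    split_ifs with h
    · rcases Nat.eq_zero_or_pos (m i) with h0 | h0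
      · simp [h0]
      · exfalso; apply hne
        have : m - Finsupp.single i 1 + Finsupp.single i 1 = m := by
          ext j
          rcases eq_or_ne j i with rfl | hj
          · simp; omega
          · simp [Finsupp.single_apply, hj.symm]
        rw [← this, h]
    · rfl
  · intro h
    rw [MvPolynomial.notMem_support_iff.mp h, zero_mul]; split <;> rfl

lemma harmonic_rel {n : ℕ} {P : MvPolynomial (Fin n) ℝ}
    (hml : IsMultilinear P) (hh : IsHarmonic P) (T : Finset (Fin n)) :
    ∑ i ∈ Tᶜ, coeff (eS (insert i T)) P = 0 := by
  classical
  have h0 : coeff (eS T) (∑ i, pderiv i P) = 0 := by rw [hh]; rfl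
  rw [MvPolynomial.coeff_sum] at h0
  simp only [coeff_pderiv'] at h0
  rw [← Finset.sum_compl_add_sum T
    (fun i => (↑(eS T i) + 1 : ℝ) * coeff (eS T + Finsupp.single i 1) P)] at h0
  have hT : ∀ i ∈ T, (↑(eS T i) + 1 : ℝ) * coeff (eS T + Finsupp.single i 1) P = 0 := by
    intro i hi
    have : coeff (eS T + Finsupp.single i 1) P = 0 := by
      by_contra hc
      have hmem : eS T + Finsupp.single i 1 ∈ P.support := MvPolynomial.mem_support_iff.mpr hc
      have := hml _ hmem i
      simp [eS_apply, hi] at this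
    simp [this]
  rw [Finset.sum_eq_zero hT, add_zero] at h0
  rw [← h0]
  apply Finset.sum_congr rfl
  intro i hi
  rw [Finset.mem_compl] at hi
  rw [eS_insert hi, eS_apply]
  simp [hi]

lemma sum_pairs {n d : ℕ} (F : Finset (Fin n) → Fin n → ℝ) :
    ∑ U ∈ powersetCard (d+1) (univ : Finset (Fin n)), ∑ i ∈ U, F (U.erase i) i
      = ∑ S ∈ powersetCard d (univ : Finset (Fin n)), ∑ i ∈ Sᶜ, F S i := by
  classical
  rw [Finset.sum_sigma', Finset.sum_sigma']
  apply Finset.sum_nbij' (i := fun p => ⟨p.1.erase p.2, p.2⟩)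
    (j := fun p => ⟨insert p.2 p.1, p.2⟩)
  · rintro ⟨U, i⟩ hp
    rw [Finset.mem_sigma] at hp ⊢
    obtain ⟨hU, hi⟩ := hp
    rw [Finset.mem_powersetCard_univ] at hU ⊢
    exact ⟨by rw [Finset.card_erase_of_mem hi, hU]; rfl,
      Finset.mem_compl.mpr (Finset.notMem_erase _ _)⟩
  · rintro ⟨S, i⟩ hp
    rw [Finset.mem_sigma] at hp ⊢
    obtain ⟨hS, hi⟩ := hp
    rw [Finset.mem_powersetCard_univ] at hS ⊢
    rw [Finset.mem_compl] at hi
    exact ⟨by rw [Finset.card_insert_of_notMem hi, hS], Finset.mem_insert_self _ _⟩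
  · rintro ⟨U, i⟩ hp
    rw [Finset.mem_sigma] at hp
    simp [Finset.insert_erase hp.2]
  · rintro ⟨S, i⟩ hp
    rw [Finset.mem_sigma] at hp
    have hi := Finset.mem_compl.mp hp.2
    simp [Finset.erase_insert hi]
  · rintro ⟨U, i⟩ hp
    rfl

lemma key_identity {n : ℕ} (d : ℕ) {P : MvPolynomial (Fin n) ℝ}
    (hml : IsMultilinear P) (hh : IsHarmonic P) :
    ∑ U ∈ powersetCard (d+1) (univ : Finset (Fin n)),
        (∑ i ∈ U, coeff (eS (U.erase i)) P)^2
      = ∑ S ∈ powersetCard d (univ : Finset (Fin n)),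
          ((Sᶜ.card : ℝ) - S.card) * (coeff (eS S) P)^2 := by
  classical
  set f : Finset (Fin n) → ℝ := fun S => coeff (eS S) P with hf
  have step1 : ∑ U ∈ powersetCard (d+1) (univ : Finset (Fin n)), (∑ i ∈ U, f (U.erase i))^2
      = ∑ U ∈ powersetCard (d+1) (univ : Finset (Fin n)),
          ∑ i ∈ U, f (U.erase i) *
            (∑ j ∈ insert i (U.erase i), f ((insert i (U.erase i)).erase j)) := by
    apply Finset.sum_congr rfl
    intro U hU
    rw [sq, Finset.sum_mul]
    apply Finset.sum_congr rfl
    intro i hi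
    rw [Finset.insert_erase hi]
  rw [step1, sum_pairs (fun S i => f S * (∑ j ∈ insert i S, f ((insert i S).erase j)))]
  apply Finset.sum_congr rfl
  intro S hS
  rw [Finset.mem_powersetCard_univ] at hS
  have inner : ∀ i ∈ Sᶜ, f S * (∑ j ∈ insert i S, f ((insert i S).erase j))
      = f S ^ 2 + ∑ j ∈ S, f S * f (insert i (S.erase j)) := by
    intro i hi
    have hiS : i ∉ S := Finset.mem_compl.mp hi
    rw [Finset.sum_insert hiS, Finset.erase_insert hiS, mul_add, ← sq, Finset.mul_sum]
    congr 1
    apply Finset.sum_congr rfl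
    intro j hj
    rw [Finset.erase_insert_of_ne (fun h => hiS (by rw [h]; exact hj))]
  rw [Finset.sum_congr rfl inner, Finset.sum_add_distrib, Finset.sum_const, Finset.sum_comm]
  have hcross : ∀ j ∈ S, ∑ i ∈ Sᶜ, f S * f (insert i (S.erase j)) = - (f S ^ 2) := by
    intro j hj
    rw [← Finset.mul_sum]
    have hc : ∑ i ∈ (S.erase j)ᶜ, f (insert i (S.erase j)) = 0 := harmonic_rel hml hh _
    rw [Finset.compl_erase, Finset.sum_insert (by simp [hj])] at hc
    rw [Finset.insert_erase hj] at hc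
    have : ∑ i ∈ Sᶜ, f (insert i (S.erase j)) = - f S := by linarith
    rw [this]; ring
  rw [Finset.sum_congr rfl hcross, Finset.sum_const, nsmul_eq_mul, nsmul_eq_mul]
  ring

lemma eq_eS_support {n : ℕ} {P : MvPolynomial (Fin n) ℝ} (hml : IsMultilinear P)
    {m : Fin n →₀ ℕ} (hm : m ∈ P.support) : m = eS m.support := by
  ext i
  rw [eS_apply]
  have h1 := hml m hm i
  by_cases h : i ∈ m.support
  · have := Finsupp.mem_support_iff.mp h; simp only [if_pos h]; omega
  · have := Finsupp.notMem_support_iff.mp h; simp [h, this]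

/-- Every nonzero harmonic multilinear polynomial in `n` variables has
total degree at most `n / 2`. -/
theorem totalDegree_le_of_harmonic_multilinear {n : ℕ} (P : MvPolynomial (Fin n) ℝ)
    (hP : P ≠ 0) (hml : IsMultilinear P) (hh : IsHarmonic P) :
    2 * P.totalDegree ≤ n := by
  classical
  set d := P.totalDegree with hd
  obtain ⟨m, hm, hdeg⟩ : ∃ m ∈ P.support, (m.sum fun _ e => e) = d := by
    obtain ⟨m, hm, h2⟩ := Finset.exists_mem_eq_sup P.support
      (MvPolynomial.support_nonempty.mpr hP) (fun m => m.sum fun _ e => e)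
    exact ⟨m, hm, h2.symm⟩
  have hms : m = eS m.support := eq_eS_support hml hm
  have hcard : m.support.card = d := by
    rw [← hdeg]; conv_rhs => rw [hms, eS_sum]
  have hS0 : m.support ∈ powersetCard d (univ : Finset (Fin n)) :=
    Finset.mem_powersetCard_univ.mpr hcard
  have hf0 : coeff (eS m.support) P ≠ 0 := by
    rw [← hms]; exact MvPolynomial.mem_support_iff.mp hm
  have hSig : 0 < ∑ S ∈ powersetCard d (univ : Finset (Fin n)), (coeff (eS S) P)^2 := by
    apply Finset.sum_pos' (fun S _ => sq_nonneg _)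
    exact ⟨m.support, hS0, by positivity⟩
  have hA : (0:ℝ) ≤ ∑ S ∈ powersetCard d (univ : Finset (Fin n)),
      ((Sᶜ.card : ℝ) - S.card) * (coeff (eS S) P)^2 := by
    rw [← key_identity d hml hh]
    exact Finset.sum_nonneg fun U _ => sq_nonneg _
  have hcoeff : ∀ S ∈ powersetCard d (univ : Finset (Fin n)),
      ((Sᶜ.card : ℝ) - S.card) * (coeff (eS S) P)^2
        = (((n - d : ℕ) : ℝ) - d) * (coeff (eS S) P)^2 := by
    intro S hS
    rw [Finset.mem_powersetCard_univ] at hS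
    rw [Finset.card_compl, hS, Fintype.card_fin]
  rw [Finset.sum_congr rfl hcoeff, ← Finset.mul_sum] at hA
  have hnd : (d:ℝ) ≤ ((n - d : ℕ) : ℝ) := by
    nlinarith [hSig, hA]
  have : d ≤ n - d := Nat.cast_le.mp hnd
  omega
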